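/- Let ψ:[t₀,∞)→(0,∞) be non-increasing with tψ(t)<1 for all large t, and let Ψ(t)=tψ(t)/(1−tψ(t)). Let x∈[0,1) be irrational with partial quotients a_n(x) and convergent denominators q_n(x). If a_{n+1}(x)·a_n(x) > Ψ(q_n(x)) for infinitely many n, then x is ψ-Dirichlet non-improvable, i.e. x∉D(ψ). -/

import Mathlib

open Filter MeasureTheory Set

/-- The set `D(ψ)` of `ψ`-Dirichlet improvable numbers: those `x ∈ ℝ` such that for all
sufficiently large `t` the system `|qx - p| < ψ t`, `|q| < t` has a nontrivial integer
solution `(p, q)`. -/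
def DirichletSet (ψ : ℝ → ℝ) : Set ℝ :=
  {x | ∃ N : ℝ, ∀ t : ℝ, t > N →
    ∃ p q : ℤ, (p, q) ≠ (0, 0) ∧ |(q : ℝ) * x - p| < ψ t ∧ |(q : ℝ)| < t}

/-- The Gauss map `T(x) = 1/x mod 1`, with `T(0) = 0`. -/
noncomputable def gaussMap (x : ℝ) : ℝ := if x = 0 then 0 else Int.fract (1 / x)

/-- `cfA x n` is the `n`-th partial quotient `a_n(x)` of the continued fraction
expansion of `x ∈ [0,1)`, for `n ≥ 1`: `a_n(x) = ⌊1 / T^{n-1}(x)⌋`. -/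
noncomputable def cfA (x : ℝ) (n : ℕ) : ℕ := ⌊1 / (gaussMap^[n - 1] x)⌋₊

/-- `cfQ x n` is the denominator `q_n(x)` of the `n`-th convergent of `x`:
`q₀ = 1`, `q₁ = a₁`, `q_{n+2} = a_{n+2} q_{n+1} + q_n`. -/
noncomputable def cfQ (x : ℝ) : ℕ → ℕ
  | 0 => 1
  | 1 => cfA x 1
  | (n + 2) => cfA x (n + 2) * cfQ x (n + 1) + cfQ x n

/-! Write `β_n = x · T(x) ⋯ Tⁿ(x)`, so that `|q_n x - p_n| = β_n` and
`q_{n+1} β_n + q_n β_{n+1} = 1`. If `x ∈ D(ψ)`, take `t = q_n` for a large `n` from the given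
infinite set: a solution `(p, q)` has `0 < |q| < q_n`, so by the best approximation property of
convergents `β_{n-1} ≤ |q x - p| < ψ(q_n)`. Inserted into the identity this gives
`Ψ(q_n) > q_n / (q_{n-1} Tⁿ(x)) ≥ a_{n+1} a_n`, since `a_{n+1} Tⁿ(x) ≤ 1` and `a_n q_{n-1} ≤ q_n`. -/

theorem Irrational.gaussMap {y : ℝ} (hy : Irrational y) : Irrational (gaussMap y) := by
  rw [_root_.gaussMap, if_neg hy.ne_zero, Int.fract, one_div]
  exact hy.inv.sub_intCast _

theorem gaussMap_mem_Ioo {y : ℝ} (hy : Irrational y) : gaussMap y ∈ Ioo 0 1 := by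
  have hne : gaussMap y ≠ 0 := hy.gaussMap.ne_zero
  rw [gaussMap, if_neg hy.ne_zero] at hne ⊢
  exact ⟨(Int.fract_nonneg _).lt_of_ne' hne, Int.fract_lt_one _⟩

theorem gaussMap_of_pos {y : ℝ} (hy : 0 < y) : gaussMap y = 1 / y - ⌊1 / y⌋₊ := by
  rw [_root_.gaussMap, if_neg hy.ne', natCast_floor_eq_intCast_floor (by positivity),
    ← Int.self_sub_fract, sub_sub_cancel]

theorem le_abs_mul_add_mul_of_mul_pos {a b u v : ℤ} (ha : 0 ≤ a) (hb : 0 ≤ b)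
    (huv : 0 < u * v) : b ≤ |u * a + v * b| := by
  rcases pos_and_pos_or_neg_and_neg_of_mul_pos huv with ⟨hu, hv⟩ | ⟨hu, hv⟩
  · rw [abs_of_nonneg (by positivity)]; nlinarith
  · rw [abs_of_nonpos (by nlinarith)]; nlinarith

section ContinuedFraction

variable {x : ℝ}

theorem iterate_gaussMap_mem_Ioo (hx : x ∈ Ioo 0 1) (hirr : Irrational x) :
    ∀ n, gaussMap^[n] x ∈ Ioo 0 1
  | 0 => hx
  | n + 1 => by
    rw [Function.iterate_succ_apply']
    exact gaussMap_mem_Ioo (Function.Iterate.rec Irrational hirr (fun _ => Irrational.gaussMap) n)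

theorem iterate_gaussMap_pos (hx : x ∈ Ioo 0 1) (hirr : Irrational x) (n : ℕ) :
    0 < gaussMap^[n] x :=
  (iterate_gaussMap_mem_Ioo hx hirr n).1

theorem cfA_succ (n : ℕ) : cfA x (n + 1) = ⌊1 / gaussMap^[n] x⌋₊ := rfl

theorem one_le_cfA (hx : x ∈ Ioo 0 1) (hirr : Irrational x) (n : ℕ) : 1 ≤ cfA x (n + 1) := by
  obtain ⟨hpos, hlt⟩ := iterate_gaussMap_mem_Ioo hx hirr n
  rw [cfA_succ]
  exact Nat.le_floor <| by rw [Nat.cast_one, le_div_iff₀ hpos]; linarith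

theorem iterate_gaussMap_mul_cfA_add (hx : x ∈ Ioo 0 1) (hirr : Irrational x) (n : ℕ) :
    gaussMap^[n] x * (cfA x (n + 1) + gaussMap^[n + 1] x) = 1 := by
  have hpos := iterate_gaussMap_pos hx hirr n
  rw [Function.iterate_succ_apply', gaussMap_of_pos hpos, cfA_succ]
  field_simp
  ring

theorem cfA_mul_iterate_gaussMap_le_one (hx : x ∈ Ioo 0 1) (hirr : Irrational x) (n : ℕ) :
    cfA x (n + 1) * gaussMap^[n] x ≤ 1 := by
  have := iterate_gaussMap_mul_cfA_add hx hirr n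
  nlinarith [iterate_gaussMap_pos hx hirr n, iterate_gaussMap_pos hx hirr (n + 1)]

noncomputable def cfP (x : ℝ) : ℕ → ℕ
  | 0 => 0
  | 1 => 1
  | (n + 2) => cfA x (n + 2) * cfP x (n + 1) + cfP x n

theorem one_le_cfQ (hx : x ∈ Ioo 0 1) (hirr : Irrational x) : ∀ n, 1 ≤ cfQ x n
  | 0 => le_rfl
  | 1 => one_le_cfA hx hirr 0
  | n + 2 => by
    have := one_le_cfQ hx hirr (n + 1)
    have := one_le_cfA hx hirr (n + 1)
    rw [cfQ]
    nlinarith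

theorem le_cfQ (hx : x ∈ Ioo 0 1) (hirr : Irrational x) : ∀ n, n ≤ cfQ x n
  | 0 => Nat.zero_le _
  | 1 => one_le_cfQ hx hirr 1
  | n + 2 => by
    have := le_cfQ hx hirr n
    have := one_le_cfQ hx hirr n
    have := le_cfQ hx hirr (n + 1)
    have := one_le_cfA hx hirr (n + 1)
    rw [cfQ]
    nlinarith

theorem cfA_mul_cfQ_le : ∀ n, cfA x (n + 1) * cfQ x n ≤ cfQ x (n + 1)
  | 0 => by simp [cfQ]
  | n + 1 => by rw [cfQ]; exact Nat.le_add_right _ _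

theorem cfP_mul_cfQ_sub_cfP_mul_cfQ (n : ℕ) :
    (cfP x (n + 1) * cfQ x n - cfP x n * cfQ x (n + 1) : ℤ) = (-1) ^ n := by
  induction n with
  | zero => simp [cfP, cfQ]
  | succ n ih =>
    rw [cfP, cfQ, pow_succ, ← ih]
    push_cast
    ring

noncomputable def cfBeta (x : ℝ) (n : ℕ) : ℝ := ∏ k ∈ Finset.range (n + 1), gaussMap^[k] x

theorem cfBeta_zero : cfBeta x 0 = x := by simp [cfBeta]

theorem cfBeta_succ (n : ℕ) : cfBeta x (n + 1) = cfBeta x n * gaussMap^[n + 1] x :=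
  Finset.prod_range_succ _ _

theorem cfBeta_pos (hx : x ∈ Ioo 0 1) (hirr : Irrational x) (n : ℕ) : 0 < cfBeta x n :=
  Finset.prod_pos fun k _ => iterate_gaussMap_pos hx hirr k

theorem cfQ_mul_sub_cfP (hx : x ∈ Ioo 0 1) (hirr : Irrational x) :
    ∀ n, (cfQ x n * x - cfP x n : ℝ) = (-1) ^ n * cfBeta x n
  | 0 => by simp [cfQ, cfP, cfBeta]
  | 1 => by
    have hrec : x * (cfA x 1 + gaussMap x) = 1 := iterate_gaussMap_mul_cfA_add hx hirr 0
    rw [cfBeta_succ, cfBeta_zero]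
    simp only [cfQ, cfP, zero_add, Function.iterate_one, Nat.cast_one]
    linear_combination hrec
  | n + 2 => by
    have h0 := cfQ_mul_sub_cfP hx hirr n
    have h1 := cfQ_mul_sub_cfP hx hirr (n + 1)
    have hrec : gaussMap^[n + 1] x * (cfA x (n + 2) + gaussMap^[n + 2] x) = 1 :=
      iterate_gaussMap_mul_cfA_add hx hirr (n + 1)
    rw [cfQ, cfP, cfBeta_succ, cfBeta_succ]
    rw [cfBeta_succ] at h1
    push_cast
    linear_combination cfA x (n + 2) * h1 + h0 - (-1) ^ n * cfBeta x n * hrec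

theorem cfQ_succ_mul_cfBeta_add (hx : x ∈ Ioo 0 1) (hirr : Irrational x) :
    ∀ n, cfQ x (n + 1) * cfBeta x n + cfQ x n * cfBeta x (n + 1) = 1
  | 0 => by
    have hrec : x * (cfA x 1 + gaussMap x) = 1 := iterate_gaussMap_mul_cfA_add hx hirr 0
    rw [cfBeta_succ, cfBeta_zero]
    simp only [cfQ, zero_add, Function.iterate_one]
    linear_combination hrec
  | n + 1 => by
    have ih := cfQ_succ_mul_cfBeta_add hx hirr n
    have hrec : gaussMap^[n + 1] x * (cfA x (n + 2) + gaussMap^[n + 2] x) = 1 :=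
      iterate_gaussMap_mul_cfA_add hx hirr (n + 1)
    rw [cfQ, cfBeta_succ (n + 1), cfBeta_succ n]
    rw [cfBeta_succ] at ih
    push_cast
    linear_combination ih + cfQ x (n + 1) * cfBeta x n * hrec

theorem exists_combination_cfP_cfQ (n : ℕ) (p q : ℤ) :
    ∃ u v : ℤ, p = u * cfP x n + v * cfP x (n + 1) ∧ q = u * cfQ x n + v * cfQ x (n + 1) := by
  have hdet := cfP_mul_cfQ_sub_cfP_mul_cfQ (x := x) n
  have hsq : ((-1 : ℤ) ^ n) ^ 2 = 1 := by rw [← pow_mul, mul_comm, pow_mul, neg_one_sq, one_pow]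
  refine ⟨(-1) ^ n * (q * cfP x (n + 1) - p * cfQ x (n + 1)),
    (-1) ^ n * (p * cfQ x n - q * cfP x n), ?_, ?_⟩
  · linear_combination (-(-1) ^ n * p) * hdet - p * hsq
  · linear_combination (-(-1) ^ n * q) * hdet - q * hsq

theorem cfBeta_le_abs_mul_sub (hx : x ∈ Ioo 0 1) (hirr : Irrational x) {n : ℕ} {p q : ℤ}
    (hq₀ : q ≠ 0) (hq : |q| < cfQ x (n + 1)) : cfBeta x n ≤ |q * x - p| := by
  obtain ⟨u, v, rfl, rfl⟩ := exists_combination_cfP_cfQ (x := x) n p q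
  have hu : u ≠ 0 := by
    rintro rfl
    have hv : 1 ≤ |v| := Int.one_le_abs fun hv => hq₀ (by simp [hv])
    rw [zero_mul, zero_add, abs_mul, Nat.abs_cast] at hq
    nlinarith
  have huv : u * v ≤ 0 := by
    by_contra! h
    exact (le_abs_mul_add_mul_of_mul_pos (by positivity) (by positivity) h).not_gt hq
  set e₀ : ℝ := cfQ x n * x - cfP x n with he₀
  set e₁ : ℝ := cfQ x (n + 1) * x - cfP x (n + 1) with he₁
  have he : e₀ * e₁ ≤ 0 := by
    have hsign : ((-1 : ℝ) ^ n) ^ 2 = 1 := by rw [← pow_mul, mul_comm, pow_mul, neg_one_sq, one_pow]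
    have := mul_pos (cfBeta_pos hx hirr n) (cfBeta_pos hx hirr (n + 1))
    rw [he₀, he₁, cfQ_mul_sub_cfP hx hirr, cfQ_mul_sub_cfP hx hirr, pow_succ]
    nlinarith
  have hsplit : ((u * cfQ x n + v * cfQ x (n + 1) : ℤ) * x - (u * cfP x n + v * cfP x (n + 1) : ℤ)
      : ℝ) = u * e₀ + v * e₁ := by
    push_cast; ring
  have hsame : 0 ≤ (u * e₀) * (v * e₁) := by
    have : ((u * v : ℤ) : ℝ) ≤ 0 := by exact_mod_cast huv
    push_cast at this
    nlinarith
  calc cfBeta x n = |e₀| := by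
        rw [he₀, cfQ_mul_sub_cfP hx hirr, abs_mul, abs_pow, abs_neg, abs_one, one_pow, one_mul,
          abs_of_pos (cfBeta_pos hx hirr n)]
    _ ≤ |(u : ℝ)| * |e₀| :=
        le_mul_of_one_le_left (abs_nonneg _) (by exact_mod_cast Int.one_le_abs hu)
    _ ≤ |u * e₀| + |v * e₁| := by rw [abs_mul]; linarith [abs_nonneg (v * e₁)]
    _ = _ := by
        rw [hsplit, eq_comm, abs_add_eq_add_abs_iff]
        exact mul_nonneg_iff.1 hsame

theorem cfA_mul_cfA_mul_cfQ_mul_iterate_gaussMap_le (hx : x ∈ Ioo 0 1) (hirr : Irrational x)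
    (n : ℕ) :
    (cfA x (n + 2) * cfA x (n + 1) * cfQ x n : ℝ) * gaussMap^[n + 1] x ≤ cfQ x (n + 1) := by
  have hqa : (cfA x (n + 1) * cfQ x n : ℝ) ≤ cfQ x (n + 1) := by
    exact_mod_cast cfA_mul_cfQ_le n
  calc (cfA x (n + 2) * cfA x (n + 1) * cfQ x n : ℝ) * gaussMap^[n + 1] x
      = (cfA x (n + 2) * gaussMap^[n + 1] x) * (cfA x (n + 1) * cfQ x n) := by ring
    _ ≤ 1 * (cfQ x (n + 1) : ℝ) :=
        mul_le_mul (cfA_mul_iterate_gaussMap_le_one hx hirr (n + 1)) hqa (by positivity)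
          zero_le_one
    _ = (cfQ x (n + 1) : ℝ) := one_mul _

theorem cfA_mul_cfA_lt_of_abs_mul_sub_lt (hx : x ∈ Ioo 0 1) (hirr : Irrational x) {n : ℕ}
    {ε : ℝ} (hε : cfQ x (n + 1) * ε < 1) {p q : ℤ} (hpq : (p, q) ≠ (0, 0))
    (happrox : |q * x - p| < ε) (hq : |(q : ℝ)| < cfQ x (n + 1)) :
    (cfA x (n + 2) * cfA x (n + 1) : ℝ) < cfQ x (n + 1) * ε / (1 - cfQ x (n + 1) * ε) := by
  have hq₀ : q ≠ 0 := by
    rintro rfl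
    have hp : (1 : ℝ) ≤ |(p : ℝ)| := by exact_mod_cast Int.one_le_abs (by simpa using hpq)
    have ht : (1 : ℝ) ≤ cfQ x (n + 1) := by exact_mod_cast one_le_cfQ hx hirr (n + 1)
    rw [Int.cast_zero, zero_mul, zero_sub, abs_neg] at happrox
    nlinarith
  have hβ : cfBeta x n < ε :=
    (cfBeta_le_abs_mul_sub hx hirr hq₀ (by exact_mod_cast hq)).trans_lt happrox
  have hε₀ : 0 < ε := (cfBeta_pos hx hirr n).trans hβ
  -- from `q_{n+1} β_n + q_n β_n T^{n+1}(x) = 1` and `β_n < ε`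
  have hs : 1 - cfQ x (n + 1) * ε < cfQ x n * gaussMap^[n + 1] x * ε := by
    have hid := cfQ_succ_mul_cfBeta_add hx hirr n
    rw [cfBeta_succ] at hid
    nlinarith [cfBeta_pos hx hirr n, iterate_gaussMap_pos hx hirr (n + 1)]
  have hA : (0 : ℝ) < cfA x (n + 2) * cfA x (n + 1) := by
    have := one_le_cfA hx hirr n
    have := one_le_cfA hx hirr (n + 1)
    positivity
  rw [lt_div_iff₀ (sub_pos.2 hε)]
  calc (cfA x (n + 2) * cfA x (n + 1) : ℝ) * (1 - cfQ x (n + 1) * ε)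
      < (cfA x (n + 2) * cfA x (n + 1) : ℝ) * (cfQ x n * gaussMap^[n + 1] x * ε) :=
        mul_lt_mul_of_pos_left hs hA
    _ = (cfA x (n + 2) * cfA x (n + 1) * cfQ x n : ℝ) * gaussMap^[n + 1] x * ε := by ring
    _ ≤ cfQ x (n + 1) * ε := by
        gcongr
        exact cfA_mul_cfA_mul_cfQ_mul_iterate_gaussMap_le hx hirr n

end ContinuedFraction

theorem not_mem_dirichletSet_of_prod_partial_quotients_gt_general
    (ψ : ℝ → ℝ)
    (hψ1 : ∃ T : ℝ, ∀ t ≥ T, t * ψ t < 1)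
    (Ψ : ℝ → ℝ) (hΨ : ∀ t, Ψ t = t * ψ t / (1 - t * ψ t))
    (x : ℝ) (hx : x ∈ Ico (0 : ℝ) 1) (hirr : Irrational x)
    (h : {n : ℕ | 0 < n ∧ Ψ (cfQ x n) < (cfA x (n + 1) : ℝ) * cfA x n}.Infinite) :
    x ∉ DirichletSet ψ := by
  rintro ⟨N, hN⟩
  obtain ⟨T, hT⟩ := hψ1
  have hx' : x ∈ Ioo 0 1 := ⟨hx.1.lt_of_ne' hirr.ne_zero, hx.2⟩
  have hq : Tendsto (fun n => (cfQ x n : ℝ)) atTop atTop :=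
    tendsto_natCast_atTop_atTop.comp (tendsto_atTop_mono (le_cfQ hx' hirr) tendsto_id)
  obtain ⟨n, ⟨hn, hΨn⟩, hNn, hTn⟩ := ((Nat.frequently_atTop_iff_infinite.2 h).and_eventually
    ((hq.eventually_gt_atTop N).and (hq.eventually_ge_atTop T))).exists
  obtain ⟨m, rfl⟩ := Nat.exists_eq_add_one.2 hn
  obtain ⟨p, q, hpq, happrox, hqt⟩ := hN _ hNn
  rw [hΨ] at hΨn
  exact hΨn.not_gt (cfA_mul_cfA_lt_of_abs_mul_sub_lt hx' hirr (hT _ hTn) hpq happrox hqt)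

/-- **Sufficient condition for Dirichlet non-improvability.** If
`a_{n+1}(x) a_n(x) > Ψ(q_n(x))` for infinitely many `n`, then `x ∉ D(ψ)`. -/
theorem not_mem_dirichletSet_of_prod_partial_quotients_gt
    (t₀ : ℝ) (ht₀ : 1 ≤ t₀) (ψ : ℝ → ℝ)
    (hψpos : ∀ t ∈ Ici t₀, 0 < ψ t) (hψanti : AntitoneOn ψ (Ici t₀))
    (hψ1 : ∃ T : ℝ, ∀ t ≥ T, t * ψ t < 1)
    (Ψ : ℝ → ℝ) (hΨ : ∀ t, Ψ t = t * ψ t / (1 - t * ψ t))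
    (x : ℝ) (hx : x ∈ Ico (0 : ℝ) 1) (hirr : Irrational x)
    (h : {n : ℕ | 0 < n ∧ Ψ (cfQ x n) < (cfA x (n + 1) : ℝ) * cfA x n}.Infinite) :
    x ∉ DirichletSet ψ :=
  not_mem_dirichletSet_of_prod_partial_quotients_gt_general ψ hψ1 Ψ hΨ x hx hirr h
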